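/- arXiv:1410.5350 — 2 statements merged into one kernel-verified Lean document; each statement's English description precedes it below -/
import Mathlib

section
/- Let N = m+n for positive integers m, n, let C = diag(𝟙ₘ, −𝟙ₙ) and 𝓔 = diag(ε₁,…,ε_N) with εₚ ∈ {+1,−1}. Let μ_j = i ρ_j with ρ₁,…,ρ_r nonzero real numbers of pairwise distinct absolute values, and let B₁,…,B_r ∈ M_N(ℂ). Define g(λ) = 𝟙 + Σ_{j=1}^r (λ/μ_j)(B_j/(λ−μ_j) + C B_j C/(λ+μ_j)), ĝ(λ) = 𝓔 g(conj(λ))† 𝓔, and for each i set Ω_i = 𝟙 + Σ_{j≠i} μ_i B_j/(μ_j(μ_i − μ_j)) + Σ_{j=1}^r μ_i C B_j C/(μ_j(μ_i + μ_j)). If g(λ) ĝ(λ) = 𝟙 for every λ ∈ ℂ outside the pole set {±μ_j}, then for every i = 1,…,r both B_i 𝓔 C B_i† = 0 and B_i 𝓔 C Ω_i† C 𝓔 = Ω_i 𝓔 C B_i† C 𝓔 hold. -/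
/-!
Near `μᵢ` the dressing factor splits as `g λ = (λ - μᵢ)⁻¹ Bᵢ + G λ` with `G` continuous at `μᵢ`
and `G μᵢ = Ωᵢ + μᵢ⁻¹ Bᵢ`. Since `g (-λ) = C g(λ) C` and the reflection `λ ↦ -conj λ` fixes the
imaginary pole `μᵢ`, the function `ĝ λ = 𝓔 C g(-conj λ)† C 𝓔` also has a simple pole at `μᵢ`,
with residue `-𝓔 C Bᵢ† C 𝓔` and regular value `𝓔 C (G μᵢ)† C 𝓔`. In `g ĝ = 𝟙` the coefficients
of `(λ - μᵢ)⁻²` and `(λ - μᵢ)⁻¹` must vanish; these are the two relations, once the double-pole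
relation is used to cancel the `μᵢ⁻¹ Bᵢ` terms in the simple-pole one.
-/

noncomputable section

open Matrix

/-- The Cartan involution matrix `C = diag(𝟙ₘ, -𝟙ₙ)`. -/
def Cmat (m n : ℕ) : Matrix (Fin m ⊕ Fin n) (Fin m ⊕ Fin n) ℂ :=
  Matrix.fromBlocks 1 0 0 (-1)

/-- The signature matrix `𝓔 = diag(ε₁,…,ε_N)`. -/
def Emat {m n : ℕ} (ε : Fin m ⊕ Fin n → ℝ) : Matrix (Fin m ⊕ Fin n) (Fin m ⊕ Fin n) ℂ :=
  Matrix.diagonal fun p => (ε p : ℂ)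

/-- The regular part `Ωᵢ = 𝟙 + Σ_{j≠i} μᵢBⱼ/(μⱼ(μᵢ-μⱼ)) + Σⱼ μᵢCBⱼC/(μⱼ(μᵢ+μⱼ))`
associated to the pole `μᵢ` of the dressing factor. -/
def Omega {m n r : ℕ} (μ : Fin r → ℂ) (B : Fin r → Matrix (Fin m ⊕ Fin n) (Fin m ⊕ Fin n) ℂ)
    (i : Fin r) : Matrix (Fin m ⊕ Fin n) (Fin m ⊕ Fin n) ℂ :=
  1 + ∑ j ∈ Finset.univ.erase i, (μ i / (μ j * (μ i - μ j))) • B j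
    + ∑ j, (μ i / (μ j * (μ i + μ j))) • (Cmat m n * B j * Cmat m n)

open Filter Topology ComplexConjugate

theorem smul_laurent_mul_laurent_sub_one {𝕜 A : Type*} [Field 𝕜] [Ring A] [Algebra 𝕜 A] {t : 𝕜}
    (ht : t ≠ 0) (p q F H : A) :
    t • ((t⁻¹ • p + F) * (t⁻¹ • q + H) - 1)
      = t⁻¹ • (p * q) + ((p * H + F * q) + t • (F * H - 1)) := by
  simp only [add_mul, mul_add, smul_mul_assoc, mul_smul_comm, smul_add, smul_sub, smul_smul,
    mul_inv_cancel₀ ht, mul_inv_cancel_left₀ ht, one_smul]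
  abel

theorem eventually_nhdsNE_forall_ne {X κ : Type*} [TopologicalSpace X] [T1Space X] [Finite κ]
    (a : X) (b : κ → X) : ∀ᶠ z in 𝓝[≠] a, ∀ j, z ≠ b j := by
  refine eventually_all.2 fun j => ?_
  obtain hb | hb := eq_or_ne (b j) a
  · exact hb ▸ self_mem_nhdsWithin
  · exact eventually_ne_nhdsWithin hb.symm

theorem tendsto_sub_nhdsNE_zero {G : Type*} [TopologicalSpace G] [AddGroup G] [ContinuousSub G]
    (a : G) : Tendsto (fun z => z - a) (𝓝[≠] a) (𝓝 0) :=
  ((continuous_sub_right a).tendsto' a 0 (sub_self a)).mono_left nhdsWithin_le_nhds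

section SimplePole

variable {𝕜 A : Type*} [NontriviallyNormedField 𝕜] [Ring A] [Algebra 𝕜 A] [TopologicalSpace A]

def HasSimplePoleAt (f : 𝕜 → A) (a : 𝕜) (p f₀ : A) : Prop :=
  Tendsto (fun z => f z - (z - a)⁻¹ • p) (𝓝[≠] a) (𝓝 f₀)

variable {f h : 𝕜 → A} {a : 𝕜} {p q f₀ h₀ : A}

theorem HasSimplePoleAt.const_mul_mul_const [IsTopologicalRing A] (hf : HasSimplePoleAt f a p f₀)
    (M N : A) : HasSimplePoleAt (fun z => M * f z * N) a (M * p * N) (M * f₀ * N) := by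
  refine ((hf.const_mul M).mul_const N).congr fun z => ?_
  simp only [mul_sub, sub_mul, mul_smul_comm, smul_mul_assoc]

theorem HasSimplePoleAt.laurent_coeffs_of_mul_eq_one [IsTopologicalRing A] [ContinuousSMul 𝕜 A]
    [T2Space A] (hf : HasSimplePoleAt f a p f₀) (hh : HasSimplePoleAt h a q h₀)
    (hfh : ∀ᶠ z in 𝓝[≠] a, f z * h z = 1) : p * q = 0 ∧ p * h₀ + f₀ * q = 0 := by
  set F := fun z => f z - (z - a)⁻¹ • p
  set H := fun z => h z - (z - a)⁻¹ • q
  set R := fun z => (p * H z + F z * q) + (z - a) • (F z * H z - 1)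
  have hR : Tendsto R (𝓝[≠] a) (𝓝 (p * h₀ + f₀ * q)) := by
    simpa using ((hh.const_mul p).add (hf.mul_const q)).add
      ((tendsto_sub_nhdsNE_zero a).smul ((hf.mul hh).sub_const 1))
  have hlaurent : ∀ᶠ z in 𝓝[≠] a, (z - a)⁻¹ • (p * q) + R z = 0 := by
    filter_upwards [hfh, self_mem_nhdsWithin] with z hfhz hz
    rw [← smul_laurent_mul_laurent_sub_one (sub_ne_zero.2 hz), add_sub_cancel, add_sub_cancel,
      hfhz, sub_self, smul_zero]
  have hpq : p * q = 0 := by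
    have hlim : Tendsto (fun z => p * q + (z - a) • R z) (𝓝[≠] a) (𝓝 (p * q)) := by
      simpa using tendsto_const_nhds.add ((tendsto_sub_nhdsNE_zero a).smul hR)
    refine tendsto_nhds_unique hlim (tendsto_const_nhds.congr' ?_)
    filter_upwards [hlaurent, self_mem_nhdsWithin] with z hz hza
    rw [← smul_zero (z - a), ← hz, smul_add, smul_smul, mul_inv_cancel₀ (sub_ne_zero.2 hza),
      one_smul]
  refine ⟨hpq, tendsto_nhds_unique hR (tendsto_const_nhds.congr' ?_)⟩
  filter_upwards [hlaurent] with z hz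
  rwa [hpq, smul_zero, zero_add, eq_comm] at hz

end SimplePole

theorem HasSimplePoleAt.star_comp_neg_conj {A : Type*} [Ring A] [StarRing A] [Algebra ℂ A]
    [StarModule ℂ A] [TopologicalSpace A] [ContinuousStar A] {f : ℂ → A} {a : ℂ} {p f₀ : A}
    (hf : HasSimplePoleAt f a p f₀) :
    HasSimplePoleAt (fun z => star (f (-conj z))) (-conj a) (-star p) (star f₀) := by
  have hrefl : Tendsto (fun z => -conj z) (𝓝[≠] (-conj a)) (𝓝[≠] a) := by
    refine tendsto_nhdsWithin_iff.2 ⟨?_, ?_⟩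
    · exact (Complex.continuous_conj.neg.tendsto' _ a (by simp)).mono_left nhdsWithin_le_nhds
    · filter_upwards [self_mem_nhdsWithin] with z hz h
      rw [Set.mem_singleton_iff] at h
      exact hz (by simp [← h])
  refine ((hf.comp hrefl).star).congr fun z => ?_
  have hcoeff : star ((-conj z - a)⁻¹) = -(z - -conj a)⁻¹ := by
    rw [star_inv₀, ← inv_neg]
    simp [add_comm, sub_eq_add_neg]
  simp only [Function.comp_apply, star_sub, star_smul, hcoeff, neg_smul, smul_neg, sub_neg_eq_add]

section Dressing

variable {ι κ : Type*} [Fintype ι] [DecidableEq ι] [Fintype κ]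

def dressing (C : Matrix ι ι ℂ) (μ : κ → ℂ) (B : κ → Matrix ι ι ℂ) (z : ℂ) : Matrix ι ι ℂ :=
  1 + ∑ j, (z / μ j) • ((z - μ j)⁻¹ • B j + (z + μ j)⁻¹ • (C * B j * C))

theorem dressing_neg {C : Matrix ι ι ℂ} (hC : C * C = 1) (μ : κ → ℂ) (B : κ → Matrix ι ι ℂ)
    (z : ℂ) : C * dressing C μ B (-z) * C = dressing C μ B z := by
  have hCXC : ∀ X : Matrix ι ι ℂ, C * (C * X * C) * C = X := fun X => by
    simp only [← mul_assoc, hC, one_mul]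
    rw [mul_assoc, hC, mul_one]
  simp only [dressing, mul_add, add_mul, mul_one, hC, Finset.mul_sum, Finset.sum_mul,
    mul_smul_comm, smul_mul_assoc, hCXC]
  congr 1
  refine Finset.sum_congr rfl fun j _ => ?_
  rw [show -z - μ j = -(z + μ j) by ring, show -z + μ j = -(z - μ j) by ring, inv_neg, inv_neg,
    add_comm]
  module

theorem hasSimplePoleAt_dressing [DecidableEq κ] (C : Matrix ι ι ℂ) {μ : κ → ℂ}
    (B : κ → Matrix ι ι ℂ) {i : κ} (hμ : μ i ≠ 0) (hne : ∀ j ≠ i, μ j ≠ μ i)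
    (hadd : ∀ j, μ i + μ j ≠ 0) :
    HasSimplePoleAt (dressing C μ B) (μ i) (B i)
      (1 + ∑ j ∈ Finset.univ.erase i, (μ i / (μ j * (μ i - μ j))) • B j
        + ∑ j, (μ i / (μ j * (μ i + μ j))) • (C * B j * C) + (μ i)⁻¹ • B i) := by
  set R : ℂ → Matrix ι ι ℂ := fun z =>
    1 + ∑ j ∈ Finset.univ.erase i, (z / μ j) • ((z - μ j)⁻¹ • B j)
      + ∑ j, (z / μ j) • ((z + μ j)⁻¹ • (C * B j * C)) + (μ i)⁻¹ • B i
  have hR : ContinuousAt R (μ i) := by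
    refine ((continuousAt_const.add (tendsto_finsetSum _ fun j hj => ?_)).add
      (tendsto_finsetSum _ fun j _ => ?_)).add continuousAt_const
    · exact (continuousAt_id.div_const _).smul (((continuousAt_id.sub continuousAt_const).inv₀
        (sub_ne_zero.2 (hne j (Finset.ne_of_mem_erase hj)).symm)).smul continuousAt_const)
    · exact (continuousAt_id.div_const _).smul
        (((continuousAt_id.add continuousAt_const).inv₀ (hadd j)).smul continuousAt_const)
  have hRμ : R (μ i) = 1 + ∑ j ∈ Finset.univ.erase i, (μ i / (μ j * (μ i - μ j))) • B j
      + ∑ j, (μ i / (μ j * (μ i + μ j))) • (C * B j * C) + (μ i)⁻¹ • B i := by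
    simp only [R, smul_smul, ← div_eq_mul_inv, div_div]
  have hsplit : ∀ z ≠ μ i, dressing C μ B z - (z - μ i)⁻¹ • B i = R z := by
    intro z hz
    have hterm : (z / μ i) • ((z - μ i)⁻¹ • B i) = (z - μ i)⁻¹ • B i + (μ i)⁻¹ • B i := by
      rw [smul_smul, ← add_smul]
      congr 1
      field_simp [sub_ne_zero.2 hz, hμ]
      ring
    simp only [dressing, smul_add, Finset.sum_add_distrib, R]
    rw [← Finset.add_sum_erase _ _ (Finset.mem_univ i), hterm]
    abel
  rw [HasSimplePoleAt, ← hRμ]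
  exact (hR.tendsto.mono_left nhdsWithin_le_nhds).congr'
    (eventually_nhdsWithin_of_forall fun z hz => (hsplit z hz).symm)

theorem HasSimplePoleAt.dressing_conj_conjTranspose {C : Matrix ι ι ℂ} (hC : C * C = 1)
    (hCH : Cᴴ = C) (E : Matrix ι ι ℂ) {μ : κ → ℂ} {B : κ → Matrix ι ι ℂ} {a : ℂ}
    (ha : conj a = -a) {p f₀ : Matrix ι ι ℂ} (hg : HasSimplePoleAt (dressing C μ B) a p f₀) :
    HasSimplePoleAt (fun z => E * (dressing C μ B (conj z))ᴴ * E) a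
      (-(E * C * pᴴ * (C * E))) (E * C * f₀ᴴ * (C * E)) := by
  have h := hg.star_comp_neg_conj.const_mul_mul_const (E * C) (C * E)
  rw [ha, neg_neg] at h
  convert h using 1
  · funext z
    rw [← dressing_neg hC μ B (conj z)]
    simp only [conjTranspose_mul, hCH, star_eq_conjTranspose, mul_assoc]
  · simp [star_eq_conjTranspose]
  · rw [star_eq_conjTranspose]

end Dressing

theorem Cmat_mul_self (m n : ℕ) : Cmat m n * Cmat m n = 1 := by
  simp [Cmat, fromBlocks_multiply, ← fromBlocks_one]

theorem conjTranspose_Cmat (m n : ℕ) : (Cmat m n)ᴴ = Cmat m n := by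
  simp [Cmat, fromBlocks_conjTranspose]

theorem Emat_mul_self {m n : ℕ} {ε : Fin m ⊕ Fin n → ℝ} (hε : ∀ p, ε p = 1 ∨ ε p = -1) :
    Emat ε * Emat ε = 1 := by
  rw [Emat, diagonal_mul_diagonal, ← diagonal_one]
  congr 1
  funext p
  rcases hε p with h | h <;> simp [h]

theorem I_mul_ofReal_add_ne_zero {κ : Type*} {ρ : κ → ℝ} (hρ0 : ∀ j, ρ j ≠ 0)
    (hdist : ∀ i j, |ρ i| = |ρ j| → i = j) (i j : κ) :
    Complex.I * ρ i + Complex.I * ρ j ≠ 0 := by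
  rw [← mul_add, ← Complex.ofReal_add, mul_ne_zero_iff, Complex.ofReal_ne_zero]
  refine ⟨Complex.I_ne_zero, fun h => ?_⟩
  obtain rfl := hdist i j (abs_eq_abs.2 (Or.inr (by linarith)))
  exact hρ0 i (by linarith)

theorem imaginary_pole_relations_general {m n r : ℕ}
    (ε : Fin m ⊕ Fin n → ℝ) (hε : ∀ p, ε p = 1 ∨ ε p = -1)
    (ρ : Fin r → ℝ) (hρ0 : ∀ j, ρ j ≠ 0)
    (hdist : ∀ i j, |ρ i| = |ρ j| → i = j)
    (μ : Fin r → ℂ) (hμ : ∀ j, μ j = Complex.I * (ρ j : ℂ))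
    (B : Fin r → Matrix (Fin m ⊕ Fin n) (Fin m ⊕ Fin n) ℂ)
    (g : ℂ → Matrix (Fin m ⊕ Fin n) (Fin m ⊕ Fin n) ℂ)
    (hg : ∀ lam, g lam = 1 + ∑ j, (lam / μ j) •
        ((lam - μ j)⁻¹ • B j + (lam + μ j)⁻¹ • (Cmat m n * B j * Cmat m n)))
    (hunit : ∀ lam : ℂ, (∀ j, lam ≠ μ j ∧ lam ≠ -μ j) →
      g lam * (Emat ε * (g (starRingEnd ℂ lam))ᴴ * Emat ε) = 1) :
    ∀ i, B i * (Emat ε * Cmat m n) * (B i)ᴴ = 0 ∧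
      B i * (Emat ε * Cmat m n) * (Omega μ B i)ᴴ * (Cmat m n * Emat ε)
        = Omega μ B i * (Emat ε * Cmat m n) * (B i)ᴴ * (Cmat m n * Emat ε) := by
  intro i
  obtain rfl : g = dressing (Cmat m n) μ B := funext hg
  have hpole : HasSimplePoleAt (dressing (Cmat m n) μ B) (μ i) (B i)
      (Omega μ B i + (μ i)⁻¹ • B i) :=
    hasSimplePoleAt_dressing _ B (by simp [hμ, hρ0]) (fun j hj h => hj (hdist j i (by simp_all)))
      fun j => by simpa only [hμ] using I_mul_ofReal_add_ne_zero hρ0 hdist i j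
  have hpole_hat := hpole.dressing_conj_conjTranspose (Cmat_mul_self m n) (conjTranspose_Cmat m n)
    (Emat ε) (by simp [hμ])
  have hunit' : ∀ᶠ z in 𝓝[≠] μ i, dressing (Cmat m n) μ B z *
      (Emat ε * (dressing (Cmat m n) μ B (conj z))ᴴ * Emat ε) = 1 := by
    filter_upwards [eventually_nhdsNE_forall_ne (μ i) μ, eventually_nhdsNE_forall_ne (μ i) (-μ)]
      with z hμz hμz' using hunit z fun j => ⟨hμz j, hμz' j⟩
  obtain ⟨hdouble, hsimple⟩ := hpole.laurent_coeffs_of_mul_eq_one hpole_hat hunit'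
  set E := Emat ε
  set C := Cmat m n
  have hBK : B i * (E * C * (B i)ᴴ * (C * E)) = 0 := by simpa using hdouble
  have hCEEC : C * E * (E * C) = 1 := by
    rw [mul_assoc, ← mul_assoc E E C, Emat_mul_self hε, one_mul, Cmat_mul_self]
  constructor
  · calc B i * (E * C) * (B i)ᴴ = B i * (E * C) * (B i)ᴴ * (C * E * (E * C)) := by
          rw [hCEEC, mul_one]
      _ = B i * (E * C * (B i)ᴴ * (C * E)) * (E * C) := by simp only [mul_assoc]
      _ = 0 := by rw [hBK, zero_mul]
  · simp only [conjTranspose_add, conjTranspose_smul, mul_add, add_mul, mul_smul_comm,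
      smul_mul_assoc, mul_neg, hBK, smul_zero, add_zero] at hsimple
    simpa only [mul_assoc] using add_neg_eq_zero.mp hsimple

/-- Degenerate case, imaginary poles `μⱼ = iρⱼ`: the double- and simple-pole
coefficients of `g ĝ = 𝟙` at `λ = μᵢ` give `Bᵢ 𝓔 C Bᵢ† = 0` and
`Bᵢ 𝓔 C Ωᵢ† C 𝓔 = Ωᵢ 𝓔 C Bᵢ† C 𝓔`. -/
theorem imaginary_pole_relations {m n r : ℕ} (hm : 0 < m) (hn : 0 < n) (hr : 0 < r)
    (ε : Fin m ⊕ Fin n → ℝ) (hε : ∀ p, ε p = 1 ∨ ε p = -1)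
    (ρ : Fin r → ℝ) (hρ0 : ∀ j, ρ j ≠ 0)
    (hdist : ∀ i j, |ρ i| = |ρ j| → i = j)
    (μ : Fin r → ℂ) (hμ : ∀ j, μ j = Complex.I * (ρ j : ℂ))
    (B : Fin r → Matrix (Fin m ⊕ Fin n) (Fin m ⊕ Fin n) ℂ)
    (g : ℂ → Matrix (Fin m ⊕ Fin n) (Fin m ⊕ Fin n) ℂ)
    (hg : ∀ lam, g lam = 1 + ∑ j, (lam / μ j) •
        ((lam - μ j)⁻¹ • B j + (lam + μ j)⁻¹ • (Cmat m n * B j * Cmat m n)))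
    (hunit : ∀ lam : ℂ, (∀ j, lam ≠ μ j ∧ lam ≠ -μ j) →
      g lam * (Emat ε * (g (starRingEnd ℂ lam))ᴴ * Emat ε) = 1) :
    ∀ i, B i * (Emat ε * Cmat m n) * (B i)ᴴ = 0 ∧
      B i * (Emat ε * Cmat m n) * (Omega μ B i)ᴴ * (Cmat m n * Emat ε)
        = Omega μ B i * (Emat ε * Cmat m n) * (B i)ᴴ * (Cmat m n * Emat ε) :=
  imaginary_pole_relations_general ε hε ρ hρ0 hdist μ hμ B g hg hunit
end
end

section
/- Let N = m+n for positive integers m, n, let C = diag(𝟙ₘ, −𝟙ₙ), let J ∈ M_N(ℂ), and let μ₁,…,μ_r ∈ ℂ\{0} with ±μ₁,…,±μ_r pairwise distinct. Let B₁,…,B_r : ℝ → M_N(ℂ) be differentiable and Q⁽⁰⁾, Q⁽¹⁾ : ℝ → M_N(ℂ) continuous. Define g(x,λ) = 𝟙 + Σ_{j=1}^r (λ/μ_j)(B_j(x)/(λ−μ_j) + C B_j(x) C/(λ+μ_j)). Suppose that for every x ∈ ℝ and every λ ∈ ℂ outside {±μ_j}: i ∂ₓg(x,λ) + λ Q⁽¹⁾(x)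 g(x,λ) − λ g(x,λ) Q⁽⁰⁾(x) − λ² [J, g(x,λ)] = 0. Then for every x, with g_∞(x) := 𝟙 + Σ_{j=1}^r (B_j(x) + C B_j(x) C)/μ_j: (a) [J, g_∞(x)] = 0, and (b) Q⁽¹⁾(x) g_∞(x) − g_∞(x) Q⁽⁰⁾(x) = [J, Σ_{j=1}^r (B_j(x) − C B_j(x) C)]. -/
noncomputable section

open Matrix

/-- Entrywise `x`-derivative of an `x`- and `λ`-dependent matrix. -/
def matDerivX {m n : ℕ} (M : ℝ → ℂ → Matrix (Fin m ⊕ Fin n) (Fin m ⊕ Fin n) ℂ)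
    (x : ℝ) (lam : ℂ) : Matrix (Fin m ⊕ Fin n) (Fin m ⊕ Fin n) ℂ :=
  Matrix.of fun p q => deriv (fun y => M y lam p q) x

/-!
Divide the dressing equation by `λ²` and by `λ` and let `λ → ∞`. Since
`λ / (μ (λ ∓ μ)) = μ⁻¹ ± λ⁻¹ + O(λ⁻²)`, the dressing factor expands as
`g = g_∞ + λ⁻¹ Σⱼ (Bⱼ - CBⱼC) + O(λ⁻²)`, while `∂ₓg` stays bounded. The `λ²`-terms give
`[J, g_∞] = 0`; using this, `λ [J, g] = [J, λ (g - g_∞)] → [J, Σⱼ (Bⱼ - CBⱼC)]`, which the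
`λ`-terms equate with `Q⁽¹⁾g_∞ - g_∞Q⁽⁰⁾`.
-/

open Filter Topology Bornology

section LargeSpectralParameter

variable {𝕜 : Type*} [NontriviallyNormedField 𝕜]

lemma tendsto_mul_inv_sub_cobounded (ν : 𝕜) :
    Tendsto (fun lam : 𝕜 => lam * (lam - ν)⁻¹) (cobounded 𝕜) (𝓝 1) := by
  have h : Tendsto (fun lam : 𝕜 => (1 - ν * lam⁻¹)⁻¹) (cobounded 𝕜) (𝓝 1) := by
    simpa using ((tendsto_inv₀_cobounded.const_mul ν).const_sub 1).inv₀ (by simp)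
  refine h.congr' ?_
  filter_upwards [eventually_ne_cobounded 0] with lam hlam
  rw [show 1 - ν * lam⁻¹ = (lam - ν) * lam⁻¹ by field_simp, mul_inv, inv_inv, mul_comm]

lemma tendsto_mul_mul_inv_sub_sub_one_cobounded (ν : 𝕜) :
    Tendsto (fun lam : 𝕜 => lam * (lam * (lam - ν)⁻¹ - 1)) (cobounded 𝕜) (𝓝 ν) := by
  have h := (tendsto_mul_inv_sub_cobounded ν).const_mul ν
  rw [mul_one] at h
  refine h.congr' ?_
  filter_upwards [eventually_ne_cobounded ν] with lam hlam
  have : lam - ν ≠ 0 := sub_ne_zero.2 hlam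
  field_simp
  ring

variable {E : Type*} [AddCommGroup E] [Module 𝕜 E] [TopologicalSpace E] [ContinuousAdd E]
  [ContinuousSMul 𝕜 E]

lemma tendsto_smul_pole_pair_cobounded (μ : 𝕜) (X Y : E) :
    Tendsto (fun lam : 𝕜 => (lam / μ) • ((lam - μ)⁻¹ • X + (lam + μ)⁻¹ • Y)) (cobounded 𝕜)
      (𝓝 (μ⁻¹ • (X + Y))) := by
  have hX := ((tendsto_mul_inv_sub_cobounded μ).const_mul μ⁻¹).smul_const X
  have hY := ((tendsto_mul_inv_sub_cobounded (-μ)).const_mul μ⁻¹).smul_const Y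
  rw [mul_one] at hX hY
  rw [smul_add]
  refine (hX.add hY).congr fun lam => ?_
  rw [sub_neg_eq_add]
  module

lemma tendsto_smul_pole_pair_sub_cobounded {μ : 𝕜} (hμ : μ ≠ 0) (X Y : E) :
    Tendsto (fun lam : 𝕜 =>
        lam • ((lam / μ) • ((lam - μ)⁻¹ • X + (lam + μ)⁻¹ • Y) - μ⁻¹ • (X + Y)))
      (cobounded 𝕜) (𝓝 (X - Y)) := by
  have hX := ((tendsto_mul_mul_inv_sub_sub_one_cobounded μ).const_mul μ⁻¹).smul_const X
  have hY := ((tendsto_mul_mul_inv_sub_sub_one_cobounded (-μ)).const_mul μ⁻¹).smul_const Y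
  rw [inv_mul_cancel₀ hμ, one_smul] at hX
  rw [mul_neg, inv_mul_cancel₀ hμ, neg_smul, one_smul] at hY
  rw [sub_eq_add_neg]
  refine (hX.add hY).congr fun lam => ?_
  rw [sub_neg_eq_add]
  module

end LargeSpectralParameter

section DressingEquationAtInfinity

variable {𝕜 A : Type*} [NontriviallyNormedField 𝕜] [Ring A] [Algebra 𝕜 A] {J Q0 Q1 : A}

lemma sq_smul_commutator_eq {lam : 𝕜} {D G : A}
    (h : D + lam • (Q1 * G) - lam • (G * Q0) - lam ^ 2 • (J * G - G * J) = 0) :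
    lam ^ 2 • (J * G - G * J) = D + lam • (Q1 * G - G * Q0) := by
  rw [smul_sub lam (Q1 * G), ← add_sub_assoc]
  exact (sub_eq_zero.1 h).symm

variable [TopologicalSpace A] [IsTopologicalRing A] [ContinuousSMul 𝕜 A] [T2Space A]
  {Ginf T Dinf : A} {G D : 𝕜 → A}

lemma commutator_limit_eq_zero (hG : Tendsto G (cobounded 𝕜) (𝓝 Ginf))
    (hD : Tendsto D (cobounded 𝕜) (𝓝 Dinf))
    (heq : ∀ᶠ lam in cobounded 𝕜, D lam + lam • (Q1 * G lam) - lam • (G lam * Q0)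
      - lam ^ 2 • (J * G lam - G lam * J) = 0) :
    J * Ginf - Ginf * J = 0 := by
  have hlim : Tendsto (fun lam => (lam⁻¹) ^ 2 • D lam + lam⁻¹ • (Q1 * G lam - G lam * Q0))
      (cobounded 𝕜) (𝓝 0) := by
    simpa using ((tendsto_inv₀_cobounded.pow 2).smul hD).add
      (tendsto_inv₀_cobounded.smul ((hG.const_mul Q1).sub (hG.mul_const Q0)))
  refine tendsto_nhds_unique ((hG.const_mul J).sub (hG.mul_const J)) (hlim.congr' ?_)
  filter_upwards [heq, eventually_ne_cobounded 0] with lam h hlam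
  rw [eq_sub_of_add_eq (sq_smul_commutator_eq h).symm]
  match_scalars <;> field_simp <;> ring

lemma potential_limit_eq_commutator (hG : Tendsto G (cobounded 𝕜) (𝓝 Ginf))
    (hGT : Tendsto (fun lam => lam • (G lam - Ginf)) (cobounded 𝕜) (𝓝 T))
    (hD : Tendsto D (cobounded 𝕜) (𝓝 Dinf)) (hcomm : J * Ginf - Ginf * J = 0)
    (heq : ∀ᶠ lam in cobounded 𝕜, D lam + lam • (Q1 * G lam) - lam • (G lam * Q0)
      - lam ^ 2 • (J * G lam - G lam * J) = 0) :
    Q1 * Ginf - Ginf * Q0 = J * T - T * J := by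
  have hlim : Tendsto (fun lam => lam⁻¹ • D lam + (Q1 * G lam - G lam * Q0))
      (cobounded 𝕜) (𝓝 (Q1 * Ginf - Ginf * Q0)) := by
    simpa using (tendsto_inv₀_cobounded.smul hD).add ((hG.const_mul Q1).sub (hG.mul_const Q0))
  have hlimT : Tendsto (fun lam => lam • (J * G lam - G lam * J)) (cobounded 𝕜)
      (𝓝 (J * T - T * J)) := by
    refine ((hGT.const_mul J).sub (hGT.mul_const J)).congr fun lam => ?_
    rw [mul_smul_comm, smul_mul_assoc, ← smul_sub, mul_sub, sub_mul, sub_eq_zero.1 hcomm]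
    abel_nf
  refine tendsto_nhds_unique (hlim.congr' ?_) hlimT
  filter_upwards [heq, eventually_ne_cobounded 0] with lam h hlam
  rw [eq_sub_of_add_eq (sq_smul_commutator_eq h).symm]
  match_scalars <;> field_simp <;> ring

end DressingEquationAtInfinity

section EntrywiseDerivative

variable {ι κ : Type*}

def matDeriv (B : ℝ → Matrix ι κ ℂ) (x : ℝ) : Matrix ι κ ℂ :=
  Matrix.of fun p q => deriv (fun y => B y p q) x

lemma hasDerivAt_mul_mul_apply [Fintype ι] [Fintype κ] {ι' κ' : Type*} (P : Matrix ι' ι ℂ)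
    (R : Matrix κ κ' ℂ) {B : ℝ → Matrix ι κ ℂ} {x : ℝ}
    (hB : ∀ p q, DifferentiableAt ℝ (fun y => B y p q) x) (p : ι') (q : κ') :
    HasDerivAt (fun y => (P * B y * R) p q) ((P * matDeriv B x * R) p q) x := by
  simp only [mul_apply, matDeriv, of_apply, Finset.sum_mul]
  exact HasDerivAt.fun_sum fun b _ => HasDerivAt.fun_sum fun a _ =>
    ((hB a b).hasDerivAt.const_mul _).mul_const _

end EntrywiseDerivative

lemma matDerivX_eq_pole_pair_sum {m n r : ℕ} (μ : Fin r → ℂ)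
    (K P R : Matrix (Fin m ⊕ Fin n) (Fin m ⊕ Fin n) ℂ)
    {B : Fin r → ℝ → Matrix (Fin m ⊕ Fin n) (Fin m ⊕ Fin n) ℂ}
    (hB : ∀ j p q, Differentiable ℝ fun y => B j y p q)
    {g : ℝ → ℂ → Matrix (Fin m ⊕ Fin n) (Fin m ⊕ Fin n) ℂ}
    (hg : ∀ y lam, g y lam = K + ∑ j, (lam / μ j) •
        ((lam - μ j)⁻¹ • B j y + (lam + μ j)⁻¹ • (P * B j y * R)))
    (x : ℝ) (lam : ℂ) :
    matDerivX g x lam = ∑ j, (lam / μ j) •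
        ((lam - μ j)⁻¹ • matDeriv (B j) x + (lam + μ j)⁻¹ • (P * matDeriv (B j) x * R)) := by
  ext p q
  simp only [matDerivX, of_apply, hg, Matrix.add_apply, Matrix.sum_apply, Matrix.smul_apply,
    smul_eq_mul]
  refine (HasDerivAt.const_add _ (HasDerivAt.fun_sum fun j _ => ?_)).deriv
  exact (((hB j p q x).hasDerivAt.const_mul _).add
    ((hasDerivAt_mul_mul_apply P R (fun p q => hB j p q x) p q).const_mul _)).const_mul _

theorem dressed_potential_reconstruction_general {m n r : ℕ}
    (J : Matrix (Fin m ⊕ Fin n) (Fin m ⊕ Fin n) ℂ)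
    (μ : Fin r → ℂ) (hμ0 : ∀ j, μ j ≠ 0)
    (B : Fin r → ℝ → Matrix (Fin m ⊕ Fin n) (Fin m ⊕ Fin n) ℂ)
    (hBd : ∀ j p q, Differentiable ℝ fun x => B j x p q)
    (Q0 Q1 : ℝ → Matrix (Fin m ⊕ Fin n) (Fin m ⊕ Fin n) ℂ)
    (g : ℝ → ℂ → Matrix (Fin m ⊕ Fin n) (Fin m ⊕ Fin n) ℂ)
    (hg : ∀ x lam, g x lam = 1 + ∑ j, (lam / μ j) •
        ((lam - μ j)⁻¹ • B j x + (lam + μ j)⁻¹ • (Cmat m n * B j x * Cmat m n)))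
    (heq : ∀ (x : ℝ) (lam : ℂ), (∀ j, lam ≠ μ j ∧ lam ≠ -μ j) →
      Complex.I • matDerivX g x lam + lam • (Q1 x * g x lam) - lam • (g x lam * Q0 x)
        - lam ^ 2 • (J * g x lam - g x lam * J) = 0) :
    ∀ x : ℝ,
      (J * (1 + ∑ j, (μ j)⁻¹ • (B j x + Cmat m n * B j x * Cmat m n))
          - (1 + ∑ j, (μ j)⁻¹ • (B j x + Cmat m n * B j x * Cmat m n)) * J = 0) ∧
      (Q1 x * (1 + ∑ j, (μ j)⁻¹ • (B j x + Cmat m n * B j x * Cmat m n))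
          - (1 + ∑ j, (μ j)⁻¹ • (B j x + Cmat m n * B j x * Cmat m n)) * Q0 x
        = J * (∑ j, (B j x - Cmat m n * B j x * Cmat m n))
          - (∑ j, (B j x - Cmat m n * B j x * Cmat m n)) * J) := by
  intro x
  set C := Cmat m n
  set gInf := 1 + ∑ j, (μ j)⁻¹ • (B j x + C * B j x * C)
  have hG : Tendsto (g x) (cobounded ℂ) (𝓝 gInf) := by
    rw [funext (hg x)]
    exact (tendsto_finsetSum _ fun j _ => tendsto_smul_pole_pair_cobounded _ _ _).const_add 1
  have hGT : Tendsto (fun lam => lam • (g x lam - gInf)) (cobounded ℂ)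
      (𝓝 (∑ j, (B j x - C * B j x * C))) := by
    simp only [gInf, hg, add_sub_add_left_eq_sub, ← Finset.sum_sub_distrib, Finset.smul_sum]
    exact tendsto_finsetSum _ fun j _ => tendsto_smul_pole_pair_sub_cobounded (hμ0 j) _ _
  have hD : Tendsto (fun lam => Complex.I • matDerivX g x lam) (cobounded ℂ)
      (𝓝 (Complex.I • ∑ j, (μ j)⁻¹ • (matDeriv (B j) x + C * matDeriv (B j) x * C))) := by
    simp only [matDerivX_eq_pole_pair_sum μ 1 C C hBd hg]
    exact (tendsto_finsetSum _ fun j _ => tendsto_smul_pole_pair_cobounded _ _ _).const_smul _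
  have heq_eventually : ∀ᶠ lam in cobounded ℂ, Complex.I • matDerivX g x lam
      + lam • (Q1 x * g x lam) - lam • (g x lam * Q0 x)
      - lam ^ 2 • (J * g x lam - g x lam * J) = 0 := by
    filter_upwards [eventually_all.2 fun j =>
      (eventually_ne_cobounded (μ j)).and (eventually_ne_cobounded (-μ j))] with lam hlam
    exact heq x lam hlam
  have hcomm := commutator_limit_eq_zero hG hD heq_eventually
  exact ⟨hcomm, potential_limit_eq_commutator hG hGT hD hcomm heq_eventually⟩

/-- Large-`λ` expansion of the dressing equation: if the dressing factor
`g(x,λ) = 𝟙 + Σⱼ (λ/μⱼ)(Bⱼ(x)/(λ-μⱼ) + CBⱼ(x)C/(λ+μⱼ))` satisfies the dressing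
equation away from the poles, then with `g_∞ = 𝟙 + Σⱼ (Bⱼ + CBⱼC)/μⱼ` one has
`[J, g_∞] = 0` and `Q⁽¹⁾g_∞ - g_∞Q⁽⁰⁾ = [J, Σⱼ (Bⱼ - CBⱼC)]`. -/
theorem dressed_potential_reconstruction {m n r : ℕ} (hm : 0 < m) (hn : 0 < n) (hr : 0 < r)
    (J : Matrix (Fin m ⊕ Fin n) (Fin m ⊕ Fin n) ℂ)
    (μ : Fin r → ℂ) (hμ0 : ∀ j, μ j ≠ 0)
    (hdist : Function.Injective fun js : Fin r × Fin 2 => ![μ js.1, -μ js.1] js.2)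
    (B : Fin r → ℝ → Matrix (Fin m ⊕ Fin n) (Fin m ⊕ Fin n) ℂ)
    (hBd : ∀ j p q, Differentiable ℝ fun x => B j x p q)
    (Q0 Q1 : ℝ → Matrix (Fin m ⊕ Fin n) (Fin m ⊕ Fin n) ℂ)
    (hQ0 : Continuous Q0) (hQ1 : Continuous Q1)
    (g : ℝ → ℂ → Matrix (Fin m ⊕ Fin n) (Fin m ⊕ Fin n) ℂ)
    (hg : ∀ x lam, g x lam = 1 + ∑ j, (lam / μ j) •
        ((lam - μ j)⁻¹ • B j x + (lam + μ j)⁻¹ • (Cmat m n * B j x * Cmat m n)))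
    (heq : ∀ (x : ℝ) (lam : ℂ), (∀ j, lam ≠ μ j ∧ lam ≠ -μ j) →
      Complex.I • matDerivX g x lam + lam • (Q1 x * g x lam) - lam • (g x lam * Q0 x)
        - lam ^ 2 • (J * g x lam - g x lam * J) = 0) :
    ∀ x : ℝ,
      (J * (1 + ∑ j, (μ j)⁻¹ • (B j x + Cmat m n * B j x * Cmat m n))
          - (1 + ∑ j, (μ j)⁻¹ • (B j x + Cmat m n * B j x * Cmat m n)) * J = 0) ∧
      (Q1 x * (1 + ∑ j, (μ j)⁻¹ • (B j x + Cmat m n * B j x * Cmat m n))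
          - (1 + ∑ j, (μ j)⁻¹ • (B j x + Cmat m n * B j x * Cmat m n)) * Q0 x
        = J * (∑ j, (B j x - Cmat m n * B j x * Cmat m n))
          - (∑ j, (B j x - Cmat m n * B j x * Cmat m n)) * J) :=
  dressed_potential_reconstruction_general J μ hμ0 B hBd Q0 Q1 g hg heq
end
end
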